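/- The general linear Lie algebra gl_{2n}(ℝ) decomposes as a direct sum of vector spaces gl_{2n}(ℝ) = 𝔤₊ ⊕ 𝔤₋, where 𝔤₊ consists of block matrices [[X,Y],[0,Z]] with X upper triangular and Z strictly upper triangular, and 𝔤₋ consists of block matrices [[U,0],[V,W]] with W = JUJ. That is, 𝔤₊ ∩ 𝔤₋ = 0 and 𝔤₊ + 𝔤₋ = gl_{2n}(ℝ). -/

import Mathlib

open Matrix

/-- The antidiagonal permutation matrix `J = ∑ E_{i, n+1-i}`. -/
noncomputable def Jmat (n : ℕ) : Matrix (Fin n) (Fin n) ℝ :=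
  fun i j => if (i : ℕ) + (j : ℕ) = n - 1 then 1 else 0

/-- `𝔤₊`: block matrices `[[X,Y],[0,Z]]` with `X` upper triangular and `Z` strictly
upper triangular. -/
def gplus (n : ℕ) : Set (Matrix (Fin n ⊕ Fin n) (Fin n ⊕ Fin n) ℝ) :=
  { M | Matrix.toBlocks₂₁ M = 0 ∧
      (∀ i j : Fin n, j < i → Matrix.toBlocks₁₁ M i j = 0) ∧
      (∀ i j : Fin n, j ≤ i → Matrix.toBlocks₂₂ M i j = 0) }

/-- `𝔤₋`: block matrices `[[U,0],[V,W]]` with `W = J U J`. -/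
noncomputable def gminus (n : ℕ) : Set (Matrix (Fin n ⊕ Fin n) (Fin n ⊕ Fin n) ℝ) :=
  { M | Matrix.toBlocks₁₂ M = 0 ∧
      Matrix.toBlocks₂₂ M = Jmat n * Matrix.toBlocks₁₁ M * Jmat n }

lemma Jmat_apply (n : ℕ) (i k : Fin n) : Jmat n i k = if k = i.rev then 1 else 0 := by
  unfold Jmat
  congr 1
  simp only [eq_iff_iff, Fin.ext_iff, Fin.val_rev]
  have := i.isLt; have := k.isLt
  omega

lemma JAJ_apply (n : ℕ) (A : Matrix (Fin n) (Fin n) ℝ) (i j : Fin n) :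
    (Jmat n * A * Jmat n) i j = A i.rev j.rev := by
  have h1 : ∀ B : Matrix (Fin n) (Fin n) ℝ, ∀ a b : Fin n, (B * Jmat n) a b = B a b.rev := by
    intro B a b
    rw [mul_apply]
    have : ∀ k : Fin n, Jmat n k b = if k = b.rev then 1 else 0 := by
      intro k
      rw [Jmat_apply]
      congr 1
      simp only [eq_iff_iff, Fin.ext_iff, Fin.val_rev]
      have := k.isLt; have := b.isLt
      omega
    simp only [this, mul_ite, mul_one, mul_zero]
    simp
  have h2 : ∀ a b : Fin n, (Jmat n * A) a b = A a.rev b := by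
    intro a b
    rw [mul_apply]
    simp only [Jmat_apply, ite_mul, one_mul, zero_mul]
    simp
  rw [h1, h2]

/-- `gl_{2n}(ℝ) = 𝔤₊ ⊕ 𝔤₋` as vector spaces: the two subspaces intersect trivially
and span everything. -/
theorem gl_direct_sum_decomposition (n : ℕ) (hn : 1 ≤ n) :
    (∀ M : Matrix (Fin n ⊕ Fin n) (Fin n ⊕ Fin n) ℝ,
        M ∈ gplus n → M ∈ gminus n → M = 0) ∧
    (∀ M : Matrix (Fin n ⊕ Fin n) (Fin n ⊕ Fin n) ℝ,
        ∃ Mp Mm, Mp ∈ gplus n ∧ Mm ∈ gminus n ∧ M = Mp + Mm) := by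
  constructor
  · rintro M ⟨h21, h11, h22⟩ ⟨h12, hW⟩
    have hA : Matrix.toBlocks₁₁ M = 0 := by
      ext i j
      rcases lt_or_ge j i with h | h
      · simpa using h11 i j h
      · have := h22 i.rev j.rev (by simpa using h)
        rw [hW, JAJ_apply] at this
        simpa using this
    have hD : Matrix.toBlocks₂₂ M = 0 := by
      rw [hW, hA]; simp
    have := Matrix.fromBlocks_toBlocks M
    rw [hA, hD, h12, h21] at this
    rw [← this]
    ext (i | i) (j | j) <;> simp [Matrix.fromBlocks]
  · intro M
    set Xm : Matrix (Fin n) (Fin n) ℝ :=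
      fun i j => if i ≤ j then Matrix.toBlocks₂₂ M i.rev j.rev else Matrix.toBlocks₁₁ M i j
      with hXm
    set Mm := Matrix.fromBlocks Xm 0 (Matrix.toBlocks₂₁ M) (Jmat n * Xm * Jmat n) with hMm
    refine ⟨M - Mm, Mm, ⟨?_, ?_, ?_⟩, ⟨?_, ?_⟩, by abel⟩
    · ext i j
      simp [Matrix.toBlocks₂₁, hMm, Matrix.fromBlocks]
    · intro i j hij
      have : ¬ i ≤ j := not_le.mpr hij
      simp [Matrix.toBlocks₁₁, hMm, Matrix.fromBlocks, hXm, this]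
    · intro i j hij
      have h' : i.rev ≤ j.rev := by simpa using hij
      rw [show (M - Mm).toBlocks₂₂ i j = M.toBlocks₂₂ i j - (Jmat n * Xm * Jmat n) i j from rfl, JAJ_apply]
      simp [Matrix.toBlocks₂₂, hMm, Matrix.fromBlocks, JAJ_apply, hXm, h', hij]
    · ext i j
      simp [Matrix.toBlocks₁₂, hMm, Matrix.fromBlocks]
    · rw [hMm, Matrix.toBlocks_fromBlocks₂₂, Matrix.toBlocks_fromBlocks₁₁]
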